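/- Let J ≥ 1, θ0, θ ∈ ℝ^d, x = (x_1,…,x_J) ∈ (ℝ^d)^J, and let h0 : (ℝ^d)^J → ℝ satisfy the weak MISC condition at x with respect to θ0. Then |gᴶ(θ,h0)(x) − gᴶ(θ0,h0)(x)| ≤ ( Σ_{j=1}^{J} 1{ |⟪x_j,θ0⟫| ≤ ‖x_j‖·‖θ − θ0‖ } ) · ( max_{1≤j≤J} ‖x_j‖ ) · ‖θ − θ0‖. -/
import Mathlib


open scoped RealInnerProductSpace

/-- The "positive part" multi-index ReLU-based maximum score function
`gᴶ₊(θ,h)(x) = max(h(x) − min_j max(−⟪x_j,θ⟫,0), 0)`. -/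
noncomputable def gJplus {d J : ℕ} (θ : EuclideanSpace ℝ (Fin d))
    (h : (Fin J → EuclideanSpace ℝ (Fin d)) → ℝ)
    (x : Fin J → EuclideanSpace ℝ (Fin d)) : ℝ :=
  max (h x - ⨅ j : Fin J, max (-⟪x j, θ⟫) 0) 0

/-- The "negative part" multi-index ReLU-based maximum score function
`gᴶ₋(θ,h)(x) = max(−h(x) − min_j max(⟪x_j,θ⟫,0), 0)`. -/
noncomputable def gJminus {d J : ℕ} (θ : EuclideanSpace ℝ (Fin d))
    (h : (Fin J → EuclideanSpace ℝ (Fin d)) → ℝ)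
    (x : Fin J → EuclideanSpace ℝ (Fin d)) : ℝ :=
  max (-h x - ⨅ j : Fin J, max ⟪x j, θ⟫ 0) 0

/-- The multi-index ReLU-based maximum score function `gᴶ = gᴶ₊ + gᴶ₋`. -/
noncomputable def gJ {d J : ℕ} (θ : EuclideanSpace ℝ (Fin d))
    (h : (Fin J → EuclideanSpace ℝ (Fin d)) → ℝ)
    (x : Fin J → EuclideanSpace ℝ (Fin d)) : ℝ :=
  gJplus θ h x + gJminus θ h x

/-- `h0` satisfies the weak multi-index single-crossing (MISC) condition at
`x = (x_1,…,x_J)` with respect to `θ0`. -/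
def WeakMISC {d J : ℕ} (θ0 : EuclideanSpace ℝ (Fin d))
    (h0 : (Fin J → EuclideanSpace ℝ (Fin d)) → ℝ)
    (x : Fin J → EuclideanSpace ℝ (Fin d)) : Prop :=
  ((∀ j, 0 < ⟪x j, θ0⟫) → 0 ≤ h0 x) ∧ ((∀ j, ⟪x j, θ0⟫ < 0) → h0 x ≤ 0)


private lemma aux_abs_ciInf_sub {ι : Type*} [Nonempty ι] [Finite ι] (f g : ι → ℝ) (c : ℝ)
    (h : ∀ j, |f j - g j| ≤ c) : |(⨅ j, f j) - ⨅ j, g j| ≤ c := by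
  have key : ∀ (f g : ι → ℝ), (∀ j, f j ≤ g j + c) → (⨅ j, f j) - (⨅ j, g j) ≤ c := by
    intro f g hfg
    rw [sub_le_iff_le_add, add_comm c _, ← sub_le_iff_le_add]
    refine le_ciInf fun j => ?_
    have h1 := ciInf_le (Finite.bddBelow_range f) j
    linarith [hfg j]
  rw [abs_sub_le_iff]
  exact ⟨key f g fun j => by linarith [(abs_le.mp (h j)).1, (abs_le.mp (h j)).2],
    key g f fun j => by linarith [(abs_le.mp (h j)).1, (abs_le.mp (h j)).2]⟩

/-- under the weak MISC condition at `x`, the deviation of the multi-index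
ReLU-based maximum score function is bounded by the number of near-binding indexes
times `(max_j ‖x_j‖)·‖θ − θ0‖`. -/
theorem gJ_band_bound {d J : ℕ} (hJ : 1 ≤ J)
    (θ0 θ : EuclideanSpace ℝ (Fin d)) (x : Fin J → EuclideanSpace ℝ (Fin d))
    (h0 : (Fin J → EuclideanSpace ℝ (Fin d)) → ℝ) (hmisc : WeakMISC θ0 h0 x) :
    |gJ θ h0 x - gJ θ0 h0 x|
      ≤ (∑ j : Fin J, if |⟪x j, θ0⟫| ≤ ‖x j‖ * ‖θ - θ0‖ then (1 : ℝ) else 0)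
          * (⨆ j : Fin J, ‖x j‖) * ‖θ - θ0‖ := by

  have hne : Nonempty (Fin J) := ⟨⟨0, hJ⟩⟩
  set ε := ‖θ - θ0‖ with hεdef
  have hε0 : 0 ≤ ε := norm_nonneg _
  set M := ⨆ j : Fin J, ‖x j‖ with hMdef
  have hMj : ∀ j, ‖x j‖ ≤ M := fun j => le_ciSup (f := fun j : Fin J => ‖x j‖) (Set.Finite.bddAbove (Set.finite_range _)) j
  have hM0 : 0 ≤ M := le_trans (norm_nonneg _) (hMj (Classical.arbitrary _))
  have hip : ∀ j : Fin J, |⟪x j, θ⟫ - ⟪x j, θ0⟫| ≤ ‖x j‖ * ε := by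
    intro j
    rw [← inner_sub_right]
    exact abs_real_inner_le_norm _ _
  have hipM : ∀ j : Fin J, |⟪x j, θ⟫ - ⟪x j, θ0⟫| ≤ M * ε := fun j =>
    (hip j).trans (mul_le_mul_of_nonneg_right (hMj j) hε0)
  have infm_nonneg : ∀ θ' : EuclideanSpace ℝ (Fin d),
      0 ≤ ⨅ j : Fin J, max (-⟪x j, θ'⟫) 0 := fun θ' => le_ciInf fun j => le_max_right _ _
  have infp_nonneg : ∀ θ' : EuclideanSpace ℝ (Fin d),
      0 ≤ ⨅ j : Fin J, max ⟪x j, θ'⟫ 0 := fun θ' => le_ciInf fun j => le_max_right _ _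
  have hminus : |(⨅ j : Fin J, max (-⟪x j, θ⟫) 0) - ⨅ j : Fin J, max (-⟪x j, θ0⟫) 0| ≤ M * ε := by
    refine aux_abs_ciInf_sub _ _ _ fun j => ?_
    refine le_trans (abs_max_sub_max_le_abs _ _ _) ?_
    rw [neg_sub_neg, abs_sub_comm]
    exact hipM j
  have hplus : |(⨅ j : Fin J, max ⟪x j, θ⟫ 0) - ⨅ j : Fin J, max ⟪x j, θ0⟫ 0| ≤ M * ε := by
    refine aux_abs_ciInf_sub _ _ _ fun j => ?_
    exact le_trans (abs_max_sub_max_le_abs _ _ _) (hipM j)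
  have hlip : |gJ θ h0 x - gJ θ0 h0 x| ≤ M * ε := by
    rcases le_total 0 (h0 x) with hh | hh
    · have e1 : ∀ θ' : EuclideanSpace ℝ (Fin d),
          gJ θ' h0 x = max (h0 x - ⨅ j : Fin J, max (-⟪x j, θ'⟫) 0) 0 := by
        intro θ'
        have : gJminus θ' h0 x = 0 := max_eq_right (by linarith [infp_nonneg θ'])
        simp [gJ, gJplus, this]
      rw [e1 θ, e1 θ0]
      refine le_trans (abs_max_sub_max_le_abs _ _ _) ?_
      have : h0 x - (⨅ j : Fin J, max (-⟪x j, θ⟫) 0) -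
          (h0 x - ⨅ j : Fin J, max (-⟪x j, θ0⟫) 0)
          = -((⨅ j : Fin J, max (-⟪x j, θ⟫) 0) - ⨅ j : Fin J, max (-⟪x j, θ0⟫) 0) := by ring
      rw [this, abs_neg]
      exact hminus
    · have e1 : ∀ θ' : EuclideanSpace ℝ (Fin d),
          gJ θ' h0 x = max (-h0 x - ⨅ j : Fin J, max ⟪x j, θ'⟫ 0) 0 := by
        intro θ'
        have : gJplus θ' h0 x = 0 := max_eq_right (by linarith [infm_nonneg θ'])
        simp [gJ, gJminus, this]
      rw [e1 θ, e1 θ0]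
      refine le_trans (abs_max_sub_max_le_abs _ _ _) ?_
      have : -h0 x - (⨅ j : Fin J, max ⟪x j, θ⟫ 0) -
          (-h0 x - ⨅ j : Fin J, max ⟪x j, θ0⟫ 0)
          = -((⨅ j : Fin J, max ⟪x j, θ⟫ 0) - ⨅ j : Fin J, max ⟪x j, θ0⟫ 0) := by ring
      rw [this, abs_neg]
      exact hplus
  by_cases hS : ∃ j, |⟪x j, θ0⟫| ≤ ‖x j‖ * ε
  · obtain ⟨j0, hj0⟩ := hS
    have hsum : (1:ℝ) ≤ ∑ j : Fin J, if |⟪x j, θ0⟫| ≤ ‖x j‖ * ε then (1:ℝ) else 0 := by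
      have h1 : (fun j : Fin J => if |⟪x j, θ0⟫| ≤ ‖x j‖ * ε then (1:ℝ) else 0) j0 = 1 :=
        if_pos hj0
      calc (1:ℝ) = _ := h1.symm
        _ ≤ _ := Finset.single_le_sum
            (f := fun j : Fin J => if |⟪x j, θ0⟫| ≤ ‖x j‖ * ε then (1:ℝ) else 0)
            (fun j _ => by positivity) (Finset.mem_univ j0)
    calc |gJ θ h0 x - gJ θ0 h0 x| ≤ M * ε := hlip
      _ = 1 * M * ε := by ring
      _ ≤ (∑ j : Fin J, if |⟪x j, θ0⟫| ≤ ‖x j‖ * ε then (1:ℝ) else 0) * M * ε := by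
          exact mul_le_mul_of_nonneg_right
            (mul_le_mul_of_nonneg_right hsum hM0) hε0
  · push_neg at hS
    have hnz : ∀ j, ⟪x j, θ0⟫ ≠ 0 := by
      intro j h
      have h2 := hS j
      rw [h, abs_zero] at h2
      exact absurd h2 (not_lt.mpr (by positivity))
    have hpos : ∀ j, 0 < ⟪x j, θ0⟫ → 0 < ⟪x j, θ⟫ := by
      intro j hj
      have h1 := (abs_le.mp (hip j)).1
      have h2 := hS j
      rw [abs_of_pos hj] at h2
      linarith
    have hneg : ∀ j, ⟪x j, θ0⟫ < 0 → ⟪x j, θ⟫ < 0 := by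
      intro j hj
      have h1 := (abs_le.mp (hip j)).2
      have h2 := hS j
      rw [abs_of_neg hj] at h2
      linarith
    have infm_zero : ∀ (θ' : EuclideanSpace ℝ (Fin d)) (j : Fin J), 0 < ⟪x j, θ'⟫ →
        (⨅ k : Fin J, max (-⟪x k, θ'⟫) 0) = 0 := by
      intro θ' j hj
      refine le_antisymm ?_ (infm_nonneg θ')
      refine ciInf_le_of_le (Finite.bddBelow_range _) j ?_
      exact le_of_eq (max_eq_right (neg_nonpos.mpr hj.le))
    have infp_zero : ∀ (θ' : EuclideanSpace ℝ (Fin d)) (j : Fin J), ⟪x j, θ'⟫ < 0 →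
        (⨅ k : Fin J, max ⟪x k, θ'⟫ 0) = 0 := by
      intro θ' j hj
      refine le_antisymm ?_ (infp_nonneg θ')
      refine ciInf_le_of_le (Finite.bddBelow_range _) j ?_
      exact le_of_eq (max_eq_right hj.le)
    have hgeq : gJ θ h0 x = gJ θ0 h0 x := by
      by_cases hex : ∃ j, 0 < ⟪x j, θ0⟫
      · obtain ⟨j, hj⟩ := hex
        have em0 : (⨅ k : Fin J, max (-⟪x k, θ0⟫) 0) = 0 := infm_zero θ0 j hj
        have em1 : (⨅ k : Fin J, max (-⟪x k, θ⟫) 0) = 0 := infm_zero θ j (hpos j hj)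
        by_cases hex' : ∃ k, ⟪x k, θ0⟫ < 0
        · obtain ⟨k, hk⟩ := hex'
          have ep0 : (⨅ l : Fin J, max ⟪x l, θ0⟫ 0) = 0 := infp_zero θ0 k hk
          have ep1 : (⨅ l : Fin J, max ⟪x l, θ⟫ 0) = 0 := infp_zero θ k (hneg k hk)
          unfold gJ gJplus gJminus
          rw [em0, em1, ep0, ep1]
        · push_neg at hex'
          have hall : ∀ k, 0 < ⟪x k, θ0⟫ := fun k =>
            lt_of_le_of_ne (hex' k) (Ne.symm (hnz k))
          have hh : 0 ≤ h0 x := hmisc.1 hall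
          have e1 : ∀ θ' : EuclideanSpace ℝ (Fin d), gJminus θ' h0 x = 0 := fun θ' =>
            max_eq_right (by linarith [infp_nonneg θ'])
          unfold gJ
          rw [e1 θ, e1 θ0]
          unfold gJplus
          rw [em0, em1]
      · push_neg at hex
        have hall : ∀ k, ⟪x k, θ0⟫ < 0 := fun k =>
          lt_of_le_of_ne (hex k) (hnz k)
        have hh : h0 x ≤ 0 := hmisc.2 hall
        have ep0 : (⨅ l : Fin J, max ⟪x l, θ0⟫ 0) = 0 :=
          infp_zero θ0 ⟨0, hJ⟩ (hall _)
        have ep1 : (⨅ l : Fin J, max ⟪x l, θ⟫ 0) = 0 :=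
          infp_zero θ ⟨0, hJ⟩ (hneg _ (hall _))
        have e1 : ∀ θ' : EuclideanSpace ℝ (Fin d), gJplus θ' h0 x = 0 := fun θ' =>
          max_eq_right (by linarith [infm_nonneg θ'])
        unfold gJ
        rw [e1 θ, e1 θ0]
        unfold gJminus
        rw [ep0, ep1]
    rw [hgeq, sub_self, abs_zero]
    positivity
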